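/- Let U be a nonempty open subset of ℂ and k_0, …, k_t positive integers. Let β_a : U → Mat(k_a, ℂ), a = 0, …, t, be smooth functions such that β_a(c) is hermitian positive definite for every c ∈ U, and let B_{a+1,a} : U → Mat(k_{a+1}, k_a; ℂ), a = 0, …, t−1, be holomorphic functions (B_{t+1,t} ≡ 0, B_{0,-1} ≡ 0). Suppose the β_a satisfy the nonabelian Toda equations ∂_+(β_a^{-1} ∂_− β_a) = β_a^{-1} (B_{a+1,a})^† β_{a+1} B_{a+1,a} − B_{a,a-1} β_{a-1}^{-1} (B_{a,a-1})^† β_a on U for a = 0, …, t. Define g_a = tr(β_a^{-1} (B_{a+1,a})^† β_{a+1} B_{a+1,a}) for a = 0, …, t−1 and g_{-1} = g_t = 0. Then for every a = 0, …, t one has ∂_+ ∂_− log(det β_a) = g_a − g_{a-1} on U, where det β_a is the (positive real-valued) determinant of β_a. -/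

import Mathlib

open Matrix
open scoped ComplexOrder

/-- The Wirtinger derivative `∂₋ F = ∂F/∂z = ½(∂ₓ - i ∂_y)F` of a matrix-valued
function on `ℂ`, taken entrywise. -/
noncomputable def wdMinus {K L : ℕ} (F : ℂ → Matrix (Fin K) (Fin L) ℂ) (c : ℂ) :
    Matrix (Fin K) (Fin L) ℂ :=
  Matrix.of fun i j =>
    (1 / 2 : ℂ) *
      (fderiv ℝ (fun z => F z i j) c 1 - Complex.I * fderiv ℝ (fun z => F z i j) c Complex.I)

/-- The Wirtinger derivative `∂₊ F = ∂F/∂z̄ = ½(∂ₓ + i ∂_y)F` of a matrix-valued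
function on `ℂ`, taken entrywise. -/
noncomputable def wdPlus {K L : ℕ} (F : ℂ → Matrix (Fin K) (Fin L) ℂ) (c : ℂ) :
    Matrix (Fin K) (Fin L) ℂ :=
  Matrix.of fun i j =>
    (1 / 2 : ℂ) *
      (fderiv ℝ (fun z => F z i j) c 1 + Complex.I * fderiv ℝ (fun z => F z i j) c Complex.I)

/-- The Wirtinger derivative `∂₋ g` of a scalar function on `ℂ`. -/
noncomputable def swdMinus (g : ℂ → ℂ) (c : ℂ) : ℂ :=
  (1 / 2 : ℂ) * (fderiv ℝ g c 1 - Complex.I * fderiv ℝ g c Complex.I)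

/-- The Wirtinger derivative `∂₊ g` of a scalar function on `ℂ`. -/
noncomputable def swdPlus (g : ℂ → ℂ) (c : ℂ) : ℂ :=
  (1 / 2 : ℂ) * (fderiv ℝ g c 1 + Complex.I * fderiv ℝ g c Complex.I)


section AuxLemmas

section Aux

variable {n : ℕ}

private lemma updateColumn_det_expand (M : Matrix (Fin n) (Fin n) ℂ) (i : Fin n) (b : Fin n → ℂ) :
    (M.updateCol i b).det
      = ∑ σ : Equiv.Perm (Fin n),
          ((Equiv.Perm.sign σ : ℤ) : ℂ) *
            (b (σ i) * ∏ j ∈ Finset.univ.erase i, M (σ j) j) := by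
  rw [Matrix.det_apply']
  refine Finset.sum_congr rfl fun σ _ => ?_
  congr 1
  rw [← Finset.mul_prod_erase Finset.univ _ (Finset.mem_univ i)]
  congr 1
  · simp [Matrix.updateCol_apply]
  · refine Finset.prod_congr rfl fun j hj => ?_
    rw [Matrix.updateCol_apply, if_neg (Finset.ne_of_mem_erase hj)]

private lemma hasFDerivAt_det' (A : ℂ → Matrix (Fin n) (Fin n) ℂ) (c : ℂ)
    (A' : Fin n → Fin n → ℂ →L[ℝ] ℂ)
    (h : ∀ i j, HasFDerivAt (fun z => A z i j) (A' i j) c) :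
    HasFDerivAt (fun z => (A z).det)
      (∑ i : Fin n, ∑ j : Fin n, (A c).adjugate i j • A' j i) c := by
  have H : HasFDerivAt (fun z => (A z).det)
      (∑ σ : Equiv.Perm (Fin n), ((Equiv.Perm.sign σ : ℤ) : ℂ) •
        ∑ i : Fin n, (∏ j ∈ Finset.univ.erase i, A c (σ j) j) • A' (σ i) i) c := by
    simp only [Matrix.det_apply']
    exact HasFDerivAt.fun_sum fun σ _ =>
      (HasFDerivAt.finset_prod (fun i _ => h (σ i) i)).const_mul _
  refine H.congr_fderiv ?_
  ext v
  simp only [ContinuousLinearMap.coe_sum', Finset.sum_apply, ContinuousLinearMap.coe_smul',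
    Pi.smul_apply, smul_eq_mul, Finset.mul_sum]
  rw [Finset.sum_comm]
  refine Finset.sum_congr rfl fun i _ => ?_
  have h1 : ∑ j : Fin n, (A c).adjugate i j * A' j i v
      = ((A c).adjugate *ᵥ fun r => A' r i v) i := by
    simp [Matrix.mulVec, dotProduct]
  rw [h1, ← Matrix.cramer_eq_adjugate_mulVec, Matrix.cramer_apply, updateColumn_det_expand]
  refine Finset.sum_congr rfl fun σ _ => ?_
  ring

private lemma differentiableAt_det' (A : ℂ → Matrix (Fin n) (Fin n) ℂ) (c : ℂ)
    (h : ∀ i j, DifferentiableAt ℝ (fun z => A z i j) c) :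
    DifferentiableAt ℝ (fun z => (A z).det) c :=
  (hasFDerivAt_det' A c _ (fun i j => (h i j).hasFDerivAt)).differentiableAt

private lemma differentiableAt_adjugate (A : ℂ → Matrix (Fin n) (Fin n) ℂ) (c : ℂ)
    (h : ∀ i j, DifferentiableAt ℝ (fun z => A z i j) c) (i j : Fin n) :
    DifferentiableAt ℝ (fun z => (A z).adjugate i j) c := by
  simp only [Matrix.adjugate_apply]
  refine differentiableAt_det' (fun z => (A z).updateRow j (Pi.single i 1)) c (fun p q => ?_)
  simp only [Matrix.updateRow_apply]
  by_cases hp : p = j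
  · simpa [hp] using differentiableAt_const _
  · simpa [hp] using h p q

private lemma differentiableAt_inv_entry (A : ℂ → Matrix (Fin n) (Fin n) ℂ) (c : ℂ)
    (h : ∀ i j, DifferentiableAt ℝ (fun z => A z i j) c) (hdet : (A c).det ≠ 0) (i j : Fin n) :
    DifferentiableAt ℝ (fun z => (A z)⁻¹ i j) c := by
  have e : (fun z => (A z)⁻¹ i j) = fun z => ((A z).det)⁻¹ * (A z).adjugate i j := by
    funext z
    rw [Matrix.inv_def, Ring.inverse_eq_inv']
    simp [Matrix.smul_apply]
  rw [e]
  exact ((differentiableAt_det' A c h).inv hdet).mul (differentiableAt_adjugate A c h i j)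

private lemma diff_fderiv_apply {f : ℂ → ℂ} {U : Set ℂ} (hU : IsOpen U)
    (hf : ContDiffOn ℝ (⊤ : ℕ∞) f U) {c : ℂ} (hc : c ∈ U) (v : ℂ) :
    DifferentiableAt ℝ (fun z => fderiv ℝ f z v) c := by
  have h1 : ContDiffOn ℝ (⊤ : ℕ∞) (fun z => fderiv ℝ f z) U :=
    hf.fderiv_of_isOpen hU (by simp)
  exact ((h1.differentiableOn (by simp)).differentiableAt (hU.mem_nhds hc)).clm_apply
    (differentiableAt_const v)

end Aux


private lemma half_sub_sum {ι : Type*} (s : Finset ι) (f g : ι → ℂ) :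
    ∑ i ∈ s, (1 / 2 : ℂ) * (f i - Complex.I * g i)
      = (1 / 2 : ℂ) * ((∑ i ∈ s, f i) - Complex.I * ∑ i ∈ s, g i) := by
  rw [← Finset.mul_sum, Finset.sum_sub_distrib, ← Finset.mul_sum]

private lemma step1 (U : Set ℂ) (hU : IsOpen U) (β : ℂ → Matrix (Fin n) (Fin n) ℂ)
    (hs : ∀ i j, ContDiffOn ℝ (⊤ : ℕ∞) (fun z => β z i j) U)
    (hpd : ∀ c ∈ U, (β c).PosDef) {z : ℂ} (hz : z ∈ U) :
    swdMinus (fun w => ((Real.log ((β w).det.re) : ℝ) : ℂ)) z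
      = Matrix.trace ((β z)⁻¹ * wdMinus β z) := by
  have hdiff : ∀ i j, DifferentiableAt ℝ (fun w => β w i j) z := fun i j =>
    ((hs i j).differentiableOn (by simp)).differentiableAt (hU.mem_nhds hz)
  set T : ℂ →L[ℝ] ℂ :=
    ∑ i : Fin n, ∑ j : Fin n, (β z).adjugate i j • fderiv ℝ (fun w => β w j i) z with hT
  have Hdet : HasFDerivAt (fun w => (β w).det) T z :=
    hasFDerivAt_det' β z _ (fun i j => (hdiff i j).hasFDerivAt)
  -- realness of T
  have him : ∀ v : ℂ, (T v).im = 0 := by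
    have h0 : (fun w => ((β w).det).im) =ᶠ[nhds z] (fun _ => (0 : ℝ)) := by
      filter_upwards [hU.mem_nhds hz] with w hw
      exact (Complex.lt_def.mp (hpd w hw).det_pos).2.symm
    have h2 : HasFDerivAt (fun w => ((β w).det).im) (Complex.imCLM.comp T) z :=
      Complex.imCLM.hasFDerivAt.comp z Hdet
    have h1 : Complex.imCLM.comp T = 0 := by
      rw [← h2.fderiv, Filter.EventuallyEq.fderiv_eq h0, fderiv_fun_const]
      rfl
    intro v
    have := congrFun (congrArg DFunLike.coe h1) v
    simpa using this
  have hdetpos := (hpd z hz).det_pos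
  have hr : (0 : ℝ) < ((β z).det).re := (Complex.lt_def.mp hdetpos).1
  have hdeteq : ((β z).det) = ((((β z).det).re : ℝ) : ℂ) := by
    apply Complex.ext
    · simp
    · simpa using ((Complex.lt_def.mp hdetpos).2).symm
  -- derivative of log det re
  have Hre : HasFDerivAt (fun w => ((β w).det).re) (Complex.reCLM.comp T) z :=
    Complex.reCLM.hasFDerivAt.comp z Hdet
  have Hlog : HasFDerivAt (fun w => Real.log ((β w).det.re))
      ((((β z).det).re)⁻¹ • (Complex.reCLM.comp T)) z := Hre.log hr.ne'
  have Hfull : HasFDerivAt (fun w => ((Real.log ((β w).det.re) : ℝ) : ℂ))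
      (Complex.ofRealCLM.comp ((((β z).det).re)⁻¹ • (Complex.reCLM.comp T))) z :=
    Complex.ofRealCLM.hasFDerivAt.comp z Hlog
  have hTreal : ∀ v : ℂ, (((T v).re : ℝ) : ℂ) = T v := fun v => by
    apply Complex.ext <;> simp [him v]
  rw [swdMinus, Hfull.fderiv]
  have happ : ∀ v : ℂ,
      (Complex.ofRealCLM.comp ((((β z).det).re)⁻¹ • (Complex.reCLM.comp T))) v
        = ((((β z).det).re : ℝ) : ℂ)⁻¹ * T v := by
    intro v
    simp only [ContinuousLinearMap.coe_comp', Function.comp_apply,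
      ContinuousLinearMap.coe_smul', Pi.smul_apply, smul_eq_mul, Complex.ofRealCLM_apply,
      Complex.reCLM_apply, Complex.ofReal_mul, Complex.ofReal_inv, hTreal v]
  rw [happ, happ]
  -- RHS computation
  have hinv : (β z)⁻¹ = ((((β z).det).re : ℝ) : ℂ)⁻¹ • (β z).adjugate := by
    rw [Matrix.inv_def, Ring.inverse_eq_inv', ← hdeteq]
  rw [hinv, Matrix.smul_mul, Matrix.trace_smul, smul_eq_mul]
  have htrace : Matrix.trace ((β z).adjugate * wdMinus β z)
      = ∑ i : Fin n, ∑ j : Fin n, (β z).adjugate i j *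
          ((1 / 2 : ℂ) * (fderiv ℝ (fun w => β w j i) z 1
            - Complex.I * fderiv ℝ (fun w => β w j i) z Complex.I)) := by
    simp [Matrix.trace, Matrix.diag, Matrix.mul_apply, wdMinus]
  have hTapp : ∀ v : ℂ, T v = ∑ i : Fin n, ∑ j : Fin n,
      (β z).adjugate i j * fderiv ℝ (fun w => β w j i) z v := by
    intro v
    simp [hT, ContinuousLinearMap.coe_sum', Finset.sum_apply, smul_eq_mul]
  rw [htrace, hTapp, hTapp]
  have hsum : ∑ i : Fin n, ∑ j : Fin n, (β z).adjugate i j *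
          ((1 / 2 : ℂ) * (fderiv ℝ (fun w => β w j i) z 1
            - Complex.I * fderiv ℝ (fun w => β w j i) z Complex.I))
      = (1 / 2 : ℂ) * ((∑ i : Fin n, ∑ j : Fin n,
            (β z).adjugate i j * fderiv ℝ (fun w => β w j i) z 1)
          - Complex.I * ∑ i : Fin n, ∑ j : Fin n,
            (β z).adjugate i j * fderiv ℝ (fun w => β w j i) z Complex.I) := by
    calc ∑ i : Fin n, ∑ j : Fin n, (β z).adjugate i j *
          ((1 / 2 : ℂ) * (fderiv ℝ (fun w => β w j i) z 1
            - Complex.I * fderiv ℝ (fun w => β w j i) z Complex.I))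
        = ∑ i : Fin n, ∑ j : Fin n, (1 / 2 : ℂ) *
            ((β z).adjugate i j * fderiv ℝ (fun w => β w j i) z 1
              - Complex.I * ((β z).adjugate i j * fderiv ℝ (fun w => β w j i) z Complex.I)) :=
          Finset.sum_congr rfl fun i _ => Finset.sum_congr rfl fun j _ => by ring
      _ = ∑ i : Fin n, (1 / 2 : ℂ) *
            ((∑ j : Fin n, (β z).adjugate i j * fderiv ℝ (fun w => β w j i) z 1)
              - Complex.I * ∑ j : Fin n,
                (β z).adjugate i j * fderiv ℝ (fun w => β w j i) z Complex.I) :=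
          Finset.sum_congr rfl fun i _ => half_sub_sum _ _ _
      _ = _ := half_sub_sum _ _ _
  rw [hsum]
  ring


private lemma half_add_sum {ι : Type*} (s : Finset ι) (f g : ι → ℂ) :
    ∑ i ∈ s, (1 / 2 : ℂ) * (f i + Complex.I * g i)
      = (1 / 2 : ℂ) * ((∑ i ∈ s, f i) + Complex.I * ∑ i ∈ s, g i) := by
  rw [← Finset.mul_sum, Finset.sum_add_distrib, ← Finset.mul_sum]

private lemma key {n : ℕ} (U : Set ℂ) (hU : IsOpen U) (β : ℂ → Matrix (Fin n) (Fin n) ℂ)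
    (hs : ∀ i j, ContDiffOn ℝ (⊤ : ℕ∞) (fun z => β z i j) U)
    (hpd : ∀ c ∈ U, (β c).PosDef) {c : ℂ} (hc : c ∈ U) :
    swdPlus (fun z => swdMinus (fun w => ((Real.log ((β w).det.re) : ℝ) : ℂ)) z) c
      = Matrix.trace (wdPlus (fun z => (β z)⁻¹ * wdMinus β z) c) := by
  have heq : (fun z => swdMinus (fun w => ((Real.log ((β w).det.re) : ℝ) : ℂ)) z)
      =ᶠ[nhds c] (fun z => Matrix.trace ((β z)⁻¹ * wdMinus β z)) := by
    filter_upwards [hU.mem_nhds hc] with z hz using step1 U hU β hs hpd hz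
  -- differentiability of entries of M z = (β z)⁻¹ * wdMinus β z
  have hdiffinv : ∀ i j, DifferentiableAt ℝ (fun z => (β z)⁻¹ i j) c := by
    intro i j
    refine differentiableAt_inv_entry β c (fun i j =>
      ((hs i j).differentiableOn (by simp)).differentiableAt (hU.mem_nhds hc))
      ((hpd c hc).det_pos.ne') i j
  have hdiffW : ∀ i j, DifferentiableAt ℝ (fun z => wdMinus β z i j) c := by
    intro i j
    simp only [wdMinus, Matrix.of_apply]
    exact (differentiableAt_const _).mul
      ((diff_fderiv_apply hU (hs i j) hc 1).sub
        ((differentiableAt_const _).mul (diff_fderiv_apply hU (hs i j) hc Complex.I)))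
  have hdiag : ∀ i : Fin n, DifferentiableAt ℝ (fun z => ((β z)⁻¹ * wdMinus β z) i i) c := by
    intro i
    simp only [Matrix.mul_apply]
    exact DifferentiableAt.fun_sum fun j _ => (hdiffinv i j).mul (hdiffW j i)
  have htr : (fun z => Matrix.trace ((β z)⁻¹ * wdMinus β z))
      = fun z => ∑ i : Fin n, ((β z)⁻¹ * wdMinus β z) i i := by
    funext z; simp [Matrix.trace, Matrix.diag]
  rw [swdPlus, Filter.EventuallyEq.fderiv_eq heq, htr,
    fderiv_fun_sum (fun i _ => hdiag i)]
  have htr2 : Matrix.trace (wdPlus (fun z => (β z)⁻¹ * wdMinus β z) c)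
      = ∑ i : Fin n, (1 / 2 : ℂ) *
          (fderiv ℝ (fun z => ((β z)⁻¹ * wdMinus β z) i i) c 1
            + Complex.I * fderiv ℝ (fun z => ((β z)⁻¹ * wdMinus β z) i i) c Complex.I) := by
    simp [Matrix.trace, Matrix.diag, wdPlus]
  rw [htr2, half_add_sum]
  simp [ContinuousLinearMap.coe_sum', Finset.sum_apply]


end AuxLemmas

/-- for hermitian positive-definite solutions `β a` of the nonabelian
Toda equations, setting `g a = tr((β a)⁻¹ (B (a+1) a)ᴴ β (a+1) B (a+1) a)` (with
`g (-1) = g t = 0`, enforced by `B (t+1) t ≡ 0`), one has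
`∂₊ ∂₋ log det (β a) = g a - g (a-1)` on `U` for every `a = 0, …, t`. -/
theorem toda_kahler_potential {t : ℕ}
    (U : Set ℂ) (hU : IsOpen U) (hne : U.Nonempty)
    (k : ℕ → ℕ) (hk : ∀ a, a ≤ t → 0 < k a)
    (β : (a : ℕ) → ℂ → Matrix (Fin (k a)) (Fin (k a)) ℂ)
    (hβs : ∀ a, a ≤ t → ∀ i j, ContDiffOn ℝ (⊤ : ℕ∞) (fun z => β a z i j) U)
    (hβpd : ∀ a, a ≤ t → ∀ c ∈ U, (β a c).PosDef)
    (B : (b : ℕ) → (a : ℕ) → ℂ → Matrix (Fin (k b)) (Fin (k a)) ℂ)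
    (hBhol : ∀ a, a < t → ∀ i j, DifferentiableOn ℂ (fun z => B (a + 1) a z i j) U)
    (hBtop : ∀ c : ℂ, B (t + 1) t c = 0)
    (hToda0 : ∀ c ∈ U,
      wdPlus (fun z => (β 0 z)⁻¹ * wdMinus (β 0) z) c
        = (β 0 c)⁻¹ * (B 1 0 c)ᴴ * β 1 c * B 1 0 c)
    (hToda : ∀ a, a < t → ∀ c ∈ U,
      wdPlus (fun z => (β (a + 1) z)⁻¹ * wdMinus (β (a + 1)) z) c
        = (β (a + 1) c)⁻¹ * (B (a + 2) (a + 1) c)ᴴ * β (a + 2) c * B (a + 2) (a + 1) c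
          - B (a + 1) a c * (β a c)⁻¹ * (B (a + 1) a c)ᴴ * β (a + 1) c)
    (g : ℕ → ℂ → ℂ)
    (hg : ∀ a, a ≤ t → ∀ c : ℂ,
      g a c = Matrix.trace ((β a c)⁻¹ * (B (a + 1) a c)ᴴ * β (a + 1) c * B (a + 1) a c)) :
    (∀ c ∈ U,
      swdPlus (fun z => swdMinus (fun w => ((Real.log ((β 0 w).det.re) : ℝ) : ℂ)) z) c
        = g 0 c) ∧
    (∀ a, a < t → ∀ c ∈ U,
      swdPlus (fun z => swdMinus (fun w => ((Real.log ((β (a + 1) w).det.re) : ℝ) : ℂ)) z) c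
        = g (a + 1) c - g a c) := by
  constructor
  · intro c hc
    rw [key U hU (β 0) (hβs 0 (Nat.zero_le t)) (hβpd 0 (Nat.zero_le t)) hc,
      hToda0 c hc, hg 0 (Nat.zero_le t) c]
  · intro a ha c hc
    rw [key U hU (β (a + 1)) (hβs (a + 1) ha) (hβpd (a + 1) ha) hc,
      hToda a ha c hc, Matrix.trace_sub, hg (a + 1) ha c, hg a (le_of_lt ha) c]
    congr 1
    rw [show B (a + 1) a c * (β a c)⁻¹ * (B (a + 1) a c)ᴴ * β (a + 1) c
        = B (a + 1) a c * ((β a c)⁻¹ * (B (a + 1) a c)ᴴ * β (a + 1) c) by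
      simp [Matrix.mul_assoc]]
    rw [Matrix.trace_mul_comm]
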